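/- arXiv:1309.0816 — 3 statements merged into one kernel-verified Lean document; each statement's English description precedes it below -/
import Mathlib

section
/- Let ρ be a positive definite density matrix (positive semidefinite with trace 1 and full rank) on a finite-dimensional Hilbert space, τ ∈ [0,1], and A, A' linear operators. Define cov_ρ^τ(A,A') := Tr(ρ^τ A ρ^{1-τ} A') - Tr(ρ A) Tr(ρ A'). Then |cov_ρ^τ(A,A')| ≤ ‖A‖_∞ ‖A'‖_∞, where ‖·‖_∞ denotes the operator norm. -/
/-!
In an eigenbasis `U` of `ρ` with eigenvalues `dᵢ`, let `B`, `B'` be the matrices of the centred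
operators `A - Tr(ρA)`, `A' - Tr(ρA')`. Since `ρ^τ ρ^{1-τ} = ρ` and `Tr ρ = 1`, the covariance is
`∑ᵢⱼ dᵢ^τ dⱼ^{1-τ} Bᵢⱼ B'ⱼᵢ`. Cauchy–Schwarz and the weighted AM–GM inequality
`dᵢ^τ dⱼ^{1-τ} ≤ τ dᵢ + (1-τ) dⱼ` bound its square by a product of two convex combinations of the
row and column variances `∑ᵢ dᵢ ∑ⱼ |Bᵢⱼ|²` and `∑ⱼ dⱼ ∑ᵢ |Bᵢⱼ|²`. A variance is a second moment minus
`|Tr(ρA)|²`, hence at most `‖A‖²`, since rows and columns of `U⋆AU` have norm at most `‖A‖`.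
-/

open scoped ComplexOrder

variable {n : Type*} [Fintype n] [DecidableEq n]

/-- `ρ^t` for a Hermitian matrix `ρ`, defined via the spectral decomposition. -/
noncomputable def mpow {ρ : Matrix n n ℂ} (hρ : ρ.IsHermitian) (t : ℝ) : Matrix n n ℂ :=
  (hρ.eigenvectorUnitary : Matrix n n ℂ) *
    Matrix.diagonal (fun i => ((hρ.eigenvalues i ^ t : ℝ) : ℂ)) *
    star (hρ.eigenvectorUnitary : Matrix n n ℂ)

/-- The operator norm `‖·‖_∞` of a matrix, acting on the Euclidean space. -/
noncomputable def opNorm (A : Matrix n n ℂ) : ℝ :=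
  ‖Matrix.toEuclideanCLM (𝕜 := ℂ) A‖

/-- The generalized covariance
`cov_ρ^τ(A,A') = Tr(ρ^τ A ρ^{1−τ} A') − Tr(ρ A) Tr(ρ A')`. -/
noncomputable def gCov {ρ : Matrix n n ℂ} (hρ : ρ.IsHermitian) (τ : ℝ)
    (A A' : Matrix n n ℂ) : ℂ :=
  (mpow hρ τ * A * mpow hρ (1 - τ) * A').trace - (ρ * A).trace * (ρ * A').trace

open Matrix Finset Complex ComplexConjugate

section

variable {ι : Type*} [Fintype ι]

lemma sum_sum_rpow_mul_rpow_mul_le {d : ι → ℝ} (hd : ∀ i, 0 ≤ d i) {s t : ℝ} (hs : 0 ≤ s)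
    (ht : 0 ≤ t) (hst : s + t = 1) {q : ι → ι → ℝ} (hq : ∀ i j, 0 ≤ q i j) :
    ∑ i, ∑ j, d i ^ s * d j ^ t * q i j ≤
      s * ∑ i, d i * ∑ j, q i j + t * ∑ j, d j * ∑ i, q i j := by
  calc ∑ i, ∑ j, d i ^ s * d j ^ t * q i j ≤ ∑ i, ∑ j, (s * d i + t * d j) * q i j := by
        gcongr with i _ j _
        · exact hq i j
        · exact Real.geom_mean_le_arith_mean2_weighted hs ht (hd i) (hd j) hst
    _ = _ := by
        simp only [add_mul, sum_add_distrib, mul_sum, mul_assoc]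
        rw [sum_comm (f := fun i j => t * (d j * q i j))]

lemma sum_mul_sum_normSq_sub_smul_one [DecidableEq ι] {d : ι → ℝ} (hd1 : ∑ i, d i = 1)
    (X : Matrix ι ι ℂ) {c : ℂ} (hc : ∑ i, (d i : ℂ) * X i i = c) :
    ∑ i, d i * ∑ j, normSq ((X - c • 1) i j) = ∑ i, d i * ∑ j, normSq (X i j) - normSq c := by
  have hrow : ∀ i, ∑ j, normSq ((X - c • 1) i j) =
      ∑ j, normSq (X i j) + (normSq c - 2 * (X i i * conj c).re) := by
    intro i
    have : ∀ j, normSq ((X - c • 1) i j) = normSq (X i j) +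
        if i = j then normSq c - 2 * (X i i * conj c).re else 0 := by
      intro j
      by_cases h : i = j
      · subst h; simp [normSq_sub]; ring
      · simp [h]
    simp only [this, sum_add_distrib, sum_ite_eq, mem_univ, if_true]
  have hmean : ∑ i, d i * (X i i * conj c).re = normSq c :=
    calc ∑ i, d i * (X i i * conj c).re = (∑ i, (d i : ℂ) * X i i * conj c).re := by
          simp only [re_sum, mul_assoc, re_ofReal_mul]
      _ = normSq c := by rw [← sum_mul, hc, mul_conj, ofReal_re]
  simp only [hrow, mul_add, mul_sub, sum_add_distrib, sum_sub_distrib, ← sum_mul, hd1,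
    mul_left_comm _ (2 : ℝ), ← mul_sum, hmean]
  ring

lemma sum_sum_rpow_mul_rpow_mul_normSq_sub_smul_one_le [DecidableEq ι] {d : ι → ℝ}
    (hd : ∀ i, 0 ≤ d i) (hd1 : ∑ i, d i = 1) {s t : ℝ} (hs : 0 ≤ s) (ht : 0 ≤ t)
    (hst : s + t = 1) {X : Matrix ι ι ℂ} {c : ℂ} (hc : ∑ i, (d i : ℂ) * X i i = c) {K : ℝ}
    (hrow : ∀ i, ∑ j, normSq (X i j) ≤ K) (hcol : ∀ j, ∑ i, normSq (X i j) ≤ K) :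
    ∑ i, ∑ j, d i ^ s * d j ^ t * normSq ((X - c • 1) i j) ≤ K := by
  have hvar : ∀ Y : Matrix ι ι ℂ, ∑ i, (d i : ℂ) * Y i i = c → (∀ i, ∑ j, normSq (Y i j) ≤ K) →
      ∑ i, d i * ∑ j, normSq ((Y - c • 1) i j) ≤ K := by
    intro Y hY hYK
    calc ∑ i, d i * ∑ j, normSq ((Y - c • 1) i j) ≤ ∑ i, d i * K := by
          rw [sum_mul_sum_normSq_sub_smul_one hd1 Y hY, sub_le_iff_le_add]
          refine le_add_of_le_of_nonneg ?_ (normSq_nonneg c)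
          gcongr with i _
          exacts [hd i, hYK i]
      _ = K := by rw [← sum_mul, hd1, one_mul]
  have hXt : ∀ i j, (Xᵀ - c • 1) j i = (X - c • 1) i j := fun i j => by
    rw [← transpose_apply (X - c • 1), transpose_sub, transpose_smul, transpose_one]
  calc ∑ i, ∑ j, d i ^ s * d j ^ t * normSq ((X - c • 1) i j)
      ≤ s * ∑ i, d i * ∑ j, normSq ((X - c • 1) i j) +
          t * ∑ j, d j * ∑ i, normSq ((X - c • 1) i j) :=
        sum_sum_rpow_mul_rpow_mul_le hd hs ht hst fun _ _ => normSq_nonneg _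
    _ ≤ s * K + t * K := by
        gcongr
        · exact hvar X hc hrow
        · simpa only [hXt] using hvar Xᵀ (by simpa using hc) hcol
    _ = K := by rw [← add_mul, hst, one_mul]

lemma norm_sum_mul_mul_sq_le {κ : Type*} [Fintype κ] {w : κ → ℝ} (hw : ∀ k, 0 ≤ w k)
    (x y : κ → ℂ) :
    ‖∑ k, (w k : ℂ) * x k * y k‖ ^ 2 ≤ (∑ k, w k * normSq (x k)) * ∑ k, w k * normSq (y k) := by
  calc ‖∑ k, (w k : ℂ) * x k * y k‖ ^ 2 ≤ (∑ k, w k * ‖x k‖ * ‖y k‖) ^ 2 := by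
        gcongr
        refine (norm_sum_le _ _).trans_eq (sum_congr rfl fun k _ => ?_)
        rw [norm_mul, norm_mul, norm_real, Real.norm_of_nonneg (hw k)]
    _ ≤ _ := by
        refine sum_sq_le_sum_mul_sum_of_sq_le_mul _
          (fun k _ => mul_nonneg (hw k) (normSq_nonneg _))
          (fun k _ => mul_nonneg (hw k) (normSq_nonneg _)) fun k _ => le_of_eq ?_
        rw [normSq_eq_norm_sq, normSq_eq_norm_sq]
        ring

lemma norm_sum_rpow_mul_rpow_mul_sq_le {d : ι → ℝ} (hd : ∀ i, 0 ≤ d i) (s t : ℝ)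
    (X Y : Matrix ι ι ℂ) :
    ‖∑ i, ∑ j, ((d i ^ s : ℝ) : ℂ) * X i j * ((d j ^ t : ℝ) : ℂ) * Y j i‖ ^ 2 ≤
      (∑ i, ∑ j, d i ^ s * d j ^ t * normSq (X i j)) *
        ∑ i, ∑ j, d i ^ t * d j ^ s * normSq (Y i j) := by
  have h := norm_sum_mul_mul_sq_le (κ := ι × ι) (w := fun p => d p.1 ^ s * d p.2 ^ t)
    (fun p => mul_nonneg (Real.rpow_nonneg (hd _) _) (Real.rpow_nonneg (hd _) _))
    (fun p => X p.1 p.2) (fun p => Y p.2 p.1)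
  simp only [Fintype.sum_prod_type] at h
  refine (le_of_eq ?_).trans (h.trans_eq ?_)
  · congr 2
    refine sum_congr rfl fun i _ => sum_congr rfl fun j _ => ?_
    push_cast
    ring
  · rw [sum_comm (f := fun i j => d i ^ t * d j ^ s * normSq (Y i j))]
    exact congrArg _ (sum_congr rfl fun i _ => sum_congr rfl fun j _ => by ring)

lemma trace_diagonal_mul_diagonal_mul {R : Type*} [CommSemiring R] [DecidableEq ι] (a b : ι → R)
    (X Y : Matrix ι ι R) :
    (diagonal a * X * diagonal b * Y).trace = ∑ i, ∑ j, a i * X i j * b j * Y j i := by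
  simp only [trace, Matrix.diag]
  refine sum_congr rfl fun i _ => ?_
  rw [mul_apply]
  simp only [mul_diagonal, diagonal_mul]

lemma trace_mul_mul_star_mul {R : Type*} [CommSemiring R] [Star R] (U M X : Matrix ι ι R) :
    (U * M * star U * X).trace = (M * (star U * X * U)).trace := by
  rw [Matrix.mul_assoc, Matrix.mul_assoc, trace_mul_comm, Matrix.mul_assoc]

end

section

open scoped Matrix.Norms.L2Operator

lemma opNorm_conjTranspose (M : Matrix n n ℂ) : opNorm Mᴴ = opNorm M :=
  l2_opNorm_conjTranspose M

lemma opNorm_star_mul_mul_unitary (U : unitaryGroup n ℂ) (M : Matrix n n ℂ) :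
    opNorm (star (U : Matrix n n ℂ) * M * (U : Matrix n n ℂ)) = opNorm M := by
  rw [opNorm, l2_opNorm_toEuclideanCLM, ← Unitary.coe_star, CStarRing.norm_mul_coe_unitary,
    CStarRing.norm_coe_unitary_mul]
  rfl

lemma sum_normSq_col_le_opNorm_sq (M : Matrix n n ℂ) (j : n) :
    ∑ i, normSq (M i j) ≤ opNorm M ^ 2 := by
  have h := l2_opNorm_mulVec M (EuclideanSpace.single j 1)
  rw [PiLp.norm_single, norm_one, mul_one] at h
  calc ∑ i, normSq (M i j)
      = ‖(EuclideanSpace.equiv n ℂ).symm (M *ᵥ EuclideanSpace.single j 1)‖ ^ 2 := by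
        rw [EuclideanSpace.norm_eq, Real.sq_sqrt (by positivity)]
        simp [normSq_eq_norm_sq]
    _ ≤ opNorm M ^ 2 := by gcongr; exact h

lemma sum_normSq_row_le_opNorm_sq (M : Matrix n n ℂ) (i : n) :
    ∑ j, normSq (M i j) ≤ opNorm M ^ 2 := by
  simpa [opNorm_conjTranspose] using sum_normSq_col_le_opNorm_sq Mᴴ i

end

section

variable {ρ : Matrix n n ℂ}

lemma trace_mpow_mul_mpow_mul (hρ : ρ.IsHermitian) (s t : ℝ) (X Y : Matrix n n ℂ) :
    (mpow hρ s * X * mpow hρ t * Y).trace =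
      ∑ i, ∑ j, ((hρ.eigenvalues i ^ s : ℝ) : ℂ) *
        (star (hρ.eigenvectorUnitary : Matrix n n ℂ) * X * hρ.eigenvectorUnitary) i j *
        ((hρ.eigenvalues j ^ t : ℝ) : ℂ) *
        (star (hρ.eigenvectorUnitary : Matrix n n ℂ) * Y * hρ.eigenvectorUnitary) j i := by
  rw [← trace_diagonal_mul_diagonal_mul, mpow, Matrix.mul_assoc _ X, Matrix.mul_assoc,
    trace_mul_mul_star_mul, mpow]
  simp only [Matrix.mul_assoc]

lemma trace_mul_eq_sum_eigenvalues_mul (hρ : ρ.IsHermitian) (X : Matrix n n ℂ) :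
    (ρ * X).trace = ∑ i, (hρ.eigenvalues i : ℂ) *
      (star (hρ.eigenvectorUnitary : Matrix n n ℂ) * X * hρ.eigenvectorUnitary) i i := by
  conv_lhs => rw [hρ.spectral_theorem, Unitary.conjStarAlgAut_apply, trace_mul_mul_star_mul]
  simp [trace, diagonal_mul]

lemma mpow_mul_mpow (hρ : ρ.PosSemidef) {s t : ℝ} (hst : s + t ≠ 0) :
    mpow hρ.1 s * mpow hρ.1 t = mpow hρ.1 (s + t) := by
  have hU := Unitary.coe_star_mul_self hρ.1.eigenvectorUnitary
  simp only [mpow, Matrix.mul_assoc]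
  rw [← Matrix.mul_assoc (star _), hU, Matrix.one_mul, ← Matrix.mul_assoc (diagonal _),
    diagonal_mul_diagonal]
  congr 3
  ext i
  rw [Real.rpow_add' (hρ.eigenvalues_nonneg i) hst, ofReal_mul]

lemma mpow_one (hρ : ρ.IsHermitian) : mpow hρ 1 = ρ := by
  conv_rhs => rw [hρ.spectral_theorem, Unitary.conjStarAlgAut_apply]
  simp [mpow, Function.comp_def]

lemma star_mul_sub_smul_one_mul (U : unitaryGroup n ℂ) (X : Matrix n n ℂ) (c : ℂ) :
    star (U : Matrix n n ℂ) * (X - c • 1) * U = star (U : Matrix n n ℂ) * X * U - c • 1 := by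
  rw [Matrix.mul_sub, Matrix.sub_mul, Matrix.mul_smul, Matrix.smul_mul, Matrix.mul_one,
    Unitary.coe_star_mul_self]

lemma gCov_eq_trace_centered (hρ : ρ.PosSemidef) (htr : ρ.trace = 1) (τ : ℝ)
    (A A' : Matrix n n ℂ) :
    gCov hρ.1 τ A A' = (mpow hρ.1 τ * (A - (ρ * A).trace • 1) * mpow hρ.1 (1 - τ) *
      (A' - (ρ * A').trace • 1)).trace := by
  have hPQ : mpow hρ.1 τ * mpow hρ.1 (1 - τ) = ρ := by
    rw [mpow_mul_mpow hρ (by norm_num), add_sub_cancel, mpow_one]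
  have hQP : mpow hρ.1 (1 - τ) * mpow hρ.1 τ = ρ := by
    rw [mpow_mul_mpow hρ (by norm_num), sub_add_cancel, mpow_one]
  simp only [gCov, Matrix.mul_sub, Matrix.sub_mul, Matrix.mul_smul, Matrix.smul_mul,
    Matrix.mul_one, trace_sub, trace_smul, hPQ, trace_mul_cycle _ A, hQP, htr, smul_eq_mul]
  ring

lemma norm_trace_mpow_mul_centered_le (hρ : ρ.PosSemidef) (htr : ρ.trace = 1) {s t : ℝ}
    (hs : 0 ≤ s) (ht : 0 ≤ t) (hst : s + t = 1) (A A' : Matrix n n ℂ) :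
    ‖(mpow hρ.1 s * (A - (ρ * A).trace • 1) * mpow hρ.1 t *
      (A' - (ρ * A').trace • 1)).trace‖ ≤ opNorm A * opNorm A' := by
  have hd := hρ.eigenvalues_nonneg
  have hd1 : ∑ i, hρ.1.eigenvalues i = 1 := by
    simpa using congrArg re (hρ.1.trace_eq_sum_eigenvalues.symm.trans htr)
  set U := hρ.1.eigenvectorUnitary
  have hbound : ∀ M : Matrix n n ℂ, ∀ {r q : ℝ}, 0 ≤ r → 0 ≤ q → r + q = 1 →
      ∑ i, ∑ j, hρ.1.eigenvalues i ^ r * hρ.1.eigenvalues j ^ q *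
        normSq ((star (U : Matrix n n ℂ) * M * U - (ρ * M).trace • 1) i j) ≤ opNorm M ^ 2 :=
    fun M r q hr hq hrq =>
      sum_sum_rpow_mul_rpow_mul_normSq_sub_smul_one_le hd hd1 hr hq hrq
        (trace_mul_eq_sum_eigenvalues_mul hρ.1 M).symm
        (fun i => opNorm_star_mul_mul_unitary U M ▸ sum_normSq_row_le_opNorm_sq _ i)
        (fun j => opNorm_star_mul_mul_unitary U M ▸ sum_normSq_col_le_opNorm_sq _ j)
  rw [trace_mpow_mul_mpow_mul, star_mul_sub_smul_one_mul, star_mul_sub_smul_one_mul]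
  refine le_of_pow_le_pow_left₀ two_ne_zero (mul_nonneg (norm_nonneg _) (norm_nonneg _)) ?_
  calc _ ≤ _ := norm_sum_rpow_mul_rpow_mul_sq_le hd s t _ _
    _ ≤ opNorm A ^ 2 * opNorm A' ^ 2 :=
        mul_le_mul (hbound A hs ht hst) (hbound A' ht hs ((add_comm t s).trans hst))
          (sum_nonneg fun i _ => sum_nonneg fun j _ => mul_nonneg (mul_nonneg
            (Real.rpow_nonneg (hd i) _) (Real.rpow_nonneg (hd j) _)) (normSq_nonneg _))
          (sq_nonneg _)
    _ = (opNorm A * opNorm A') ^ 2 := by ring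

end

/-- For a positive definite density matrix `ρ` and `τ ∈ [0,1]`,
`|cov_ρ^τ(A,A')| ≤ ‖A‖_∞ ‖A'‖_∞`. -/
theorem stmt4 (ρ : Matrix n n ℂ) (hρ : ρ.PosDef) (htr : ρ.trace = 1)
    (τ : ℝ) (hτ : τ ∈ Set.Icc (0 : ℝ) 1) (A A' : Matrix n n ℂ) :
    ‖gCov hρ.1 τ A A'‖ ≤ opNorm A * opNorm A' := by
  rw [gCov_eq_trace_centered hρ.posSemidef htr]
  exact norm_trace_mpow_mul_centered_le hρ.posSemidef htr hτ.1 (sub_nonneg.2 hτ.2)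
    (add_sub_cancel _ _) A A'
end

section
/- Let H₀ and H be Hermitian matrices on a finite-dimensional Hilbert space, β ∈ ℝ, and for s ∈ [0,1] set H(s) := H₀ + s(H−H₀) with Gibbs state g_s(β) := e^{−βH(s)}/Tr(e^{−βH(s)}). Then for any operator A, Tr(A g₀(β)) − Tr(A g₁(β)) = β ∫₀¹∫₀¹ cov_{g_s(β)}^τ (H−H₀, A) dτ ds, where cov_ρ^τ(X,Y) := Tr(ρ^τ X ρ^{1−τ} Y) − Tr(ρX)Tr(ρY). -/
open Matrix intervalIntegral

variable {n : Type*} [Fintype n] [DecidableEq n]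

/-- `e^{−tβ H}` for a matrix `H`. -/
noncomputable def expH (H : Matrix n n ℂ) (β t : ℝ) : Matrix n n ℂ :=
  NormedSpace.exp ((-(t * β) : ℂ) • H)

/-- The partition function `Z(β) = Tr e^{−βH}`. -/
noncomputable def partZ (H : Matrix n n ℂ) (β : ℝ) : ℂ := (expH H β 1).trace

/-- The Gibbs state `g(β) = e^{−βH}/Z(β)`. -/
noncomputable def gibbs (H : Matrix n n ℂ) (β : ℝ) : Matrix n n ℂ :=
  (partZ H β)⁻¹ • expH H β 1

/-- The generalized covariance `cov_{g(β)}^τ(X,Y) = Tr(g^τ X g^{1−τ} Y) − Tr(g X) Tr(g Y)`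
of the Gibbs state of `H`, using `g(β)^τ = e^{−τβH}/Z^τ` and `Z^τ Z^{1−τ} = Z`. -/
noncomputable def gibbsCov (H : Matrix n n ℂ) (β τ : ℝ) (X Y : Matrix n n ℂ) : ℂ :=
  (expH H β τ * X * expH H β (1 - τ) * Y).trace / partZ H β -
    (gibbs H β * X).trace * (gibbs H β * Y).trace

/-! Along `H(s) = H₀ + s (H − H₀)`, Duhamel's formula
`e^X − e^Y = ∫₀¹ e^{τX} (X − Y) e^{(1−τ)Y} dτ` shows that `u ↦ e^{X + uY}` has derivative
`∫₀¹ e^{τX} Y e^{(1−τ)X} dτ`. Applied to `Tr(A e^{−βH(s)})` and to the partition function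
`Z(s) = Tr e^{−βH(s)}` (where cyclicity of the trace collapses the integral), the quotient rule
gives `d/ds Tr(A g_s) = −β ∫₀¹ cov^τ_{g_s}(H − H₀, A) dτ`. Integrating over `s ∈ [0, 1]` and
exchanging the two integrals gives the formula. The quotient is legitimate since
`e^{−βH} = (e^{−βH/2})ᴴ e^{−βH/2}` with `e^{−βH/2}` invertible, so `Z(s) ≠ 0`. -/

open NormedSpace

section Duhamel

variable {𝔸 : Type*} [NormedRing 𝔸] [NormedAlgebra ℝ 𝔸] [CompleteSpace 𝔸]

@[fun_prop]
theorem continuous_exp_of_real : Continuous (exp : 𝔸 → 𝔸) :=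
  continuous_iff_continuousAt.2 fun x => (exp_analytic (𝕂 := ℝ) x).continuousAt

theorem exp_sub_exp_eq_intervalIntegral (x y : 𝔸) :
    exp x - exp y = ∫ τ in (0:ℝ)..1, exp (τ • x) * (x - y) * exp ((1 - τ) • y) := by
  have hderiv : ∀ τ : ℝ, HasDerivAt (fun t : ℝ => exp (t • x) * exp ((1 - t) • y))
      (exp (τ • x) * (x - y) * exp ((1 - τ) • y)) τ := by
    intro τ
    have h₂ : HasDerivAt (fun t : ℝ => exp ((1 - t) • y)) (-(y * exp ((1 - τ) • y))) τ := by
      simpa [Function.comp_def] using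
        (hasDerivAt_exp_smul_const' y (1 - τ)).scomp τ ((hasDerivAt_id τ).const_sub 1)
    refine ((hasDerivAt_exp_smul_const x τ).mul h₂).congr_deriv ?_
    noncomm_ring
  rw [integral_eq_sub_of_hasDerivAt (fun τ _ => hderiv τ)
    (Continuous.intervalIntegrable (by fun_prop) _ _)]
  simp

theorem hasDerivAt_exp_add_smul (x y : 𝔸) (s : ℝ) :
    HasDerivAt (fun u : ℝ => exp (x + u • y))
      (∫ τ in (0:ℝ)..1, exp (τ • (x + s • y)) * y * exp ((1 - τ) • (x + s • y))) s := by
  set G : ℝ → 𝔸 := fun u =>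
    ∫ τ in (0:ℝ)..1, exp (τ • (x + u • y)) * y * exp ((1 - τ) • (x + s • y))
  have hG : Continuous G :=
    continuous_parametric_intervalIntegral_of_continuous' (by fun_prop) 0 1
  rw [hasDerivAt_iff_tendsto_slope]
  refine ((hG.tendsto s).mono_left nhdsWithin_le_nhds).congr' ?_
  filter_upwards [self_mem_nhdsWithin] with u hu
  have hdiff : x + u • y - (x + s • y) = (u - s) • y := by rw [sub_smul]; abel
  simp_rw [G, slope_def_module, exp_sub_exp_eq_intervalIntegral, hdiff, mul_smul_comm,
    smul_mul_assoc, integral_smul, smul_smul,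
    inv_mul_cancel₀ (sub_ne_zero.mpr hu), one_smul]

theorem hasDerivAt_clm_exp_add_smul {F : Type*} [NormedAddCommGroup F] [NormedSpace ℝ F]
    [CompleteSpace F] (L : 𝔸 →L[ℝ] F) (x y : 𝔸) (s : ℝ) :
    HasDerivAt (fun u : ℝ => L (exp (x + u • y)))
      (∫ τ in (0:ℝ)..1, L (exp (τ • (x + s • y)) * y * exp ((1 - τ) • (x + s • y)))) s := by
  rw [L.intervalIntegral_comp_comm (Continuous.intervalIntegrable (by fun_prop) _ _)]
  exact L.hasFDerivAt.comp_hasDerivAt s (hasDerivAt_exp_add_smul x y s)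

end Duhamel

theorem intervalIntegral_swap_of_continuous {E : Type*} [NormedAddCommGroup E] [NormedSpace ℝ E]
    {F : ℝ → ℝ → E} (hF : Continuous fun p : ℝ × ℝ => F p.1 p.2) (a b c d : ℝ) :
    ∫ x in a..b, ∫ y in c..d, F x y = ∫ y in c..d, ∫ x in a..b, F x y :=
  MeasureTheory.intervalIntegral_intervalIntegral_swap
    ((hF.continuousOn.integrableOn_compact (isCompact_uIcc.prod isCompact_uIcc)).mono_set
      (Set.prod_mono Set.uIoc_subset_uIcc Set.uIoc_subset_uIcc))

section Matrix

attribute [local instance] Matrix.linftyOpNormedRing Matrix.linftyOpNormedAlgebra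

theorem hasDerivAt_trace_mul_exp_add_smul (P X Y : Matrix n n ℂ) (s : ℝ) :
    HasDerivAt (fun u : ℝ => (P * exp (X + u • Y)).trace)
      (∫ τ in (0:ℝ)..1, (P * exp (τ • (X + s • Y)) * Y * exp ((1 - τ) • (X + s • Y))).trace) s := by
  let L : Matrix n n ℂ →L[ℝ] ℂ :=
    LinearMap.toContinuousLinearMap ((traceLinearMap n ℝ ℂ).comp (LinearMap.mulLeft ℝ P))
  have h := hasDerivAt_clm_exp_add_smul L X Y s
  simp only [mul_assoc] at h ⊢
  exact h

theorem expH_eq_exp_smul (H : Matrix n n ℂ) (β t : ℝ) :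
    expH H β t = exp (t • ((-(β : ℂ)) • H)) := by
  rw [expH, ← Complex.coe_smul, smul_smul]
  congr 2
  ring

theorem expH_add (H : Matrix n n ℂ) (β s t : ℝ) :
    expH H β (s + t) = expH H β s * expH H β t := by
  simp only [expH_eq_exp_smul, add_smul]
  exact Matrix.exp_add_of_commute _ _ (((Commute.refl _).smul_left s).smul_right t)

theorem continuous_expH (H : Matrix n n ℂ) (β : ℝ) : Continuous (expH H β) := by
  unfold expH
  fun_prop

theorem isHermitian_expH {H : Matrix n n ℂ} (hH : H.IsHermitian) (β t : ℝ) :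
    (expH H β t).IsHermitian :=
  (hH.smul (by simp [IsSelfAdjoint])).exp

open scoped ComplexOrder in
theorem partZ_ne_zero [Nonempty n] {H : Matrix n n ℂ} (hH : H.IsHermitian) (β : ℝ) :
    partZ H β ≠ 0 := by
  have hsq : expH H β 1 = (expH H β (1 / 2))ᴴ * expH H β (1 / 2) := by
    rw [(isHermitian_expH hH β _).eq, ← expH_add]
    norm_num
  rw [partZ, hsq, Ne, trace_conjTranspose_mul_self_eq_zero_iff]
  exact (Matrix.isUnit_exp _).ne_zero

theorem trace_expH_mul_mul_expH (H X : Matrix n n ℂ) (β τ : ℝ) :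
    (expH H β τ * X * expH H β (1 - τ)).trace = (expH H β 1 * X).trace := by
  rw [trace_mul_cycle, ← expH_add, sub_add_cancel]

theorem trace_mul_gibbs (A H : Matrix n n ℂ) (β : ℝ) :
    (A * gibbs H β).trace = (A * expH H β 1).trace / partZ H β := by
  rw [gibbs, mul_smul_comm, trace_smul, smul_eq_mul, div_eq_inv_mul]

theorem trace_gibbs_mul (H X : Matrix n n ℂ) (β : ℝ) :
    (gibbs H β * X).trace = (expH H β 1 * X).trace / partZ H β := by
  rw [gibbs, smul_mul_assoc, trace_smul, smul_eq_mul, div_eq_inv_mul]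

theorem integral_gibbsCov (H X Y : Matrix n n ℂ) (β : ℝ) :
    ∫ τ in (0:ℝ)..1, gibbsCov H β τ X Y =
      (∫ τ in (0:ℝ)..1, (expH H β τ * X * expH H β (1 - τ) * Y).trace) / partZ H β -
        (gibbs H β * X).trace * (gibbs H β * Y).trace := by
  have hE := continuous_expH H β
  simp only [gibbsCov]
  rw [integral_sub (Continuous.intervalIntegrable (by fun_prop) _ _) intervalIntegrable_const,
    integral_div, integral_const]
  simp

theorem expH_add_smul_eq_exp (H₀ K : Matrix n n ℂ) (β u t : ℝ) :
    expH (H₀ + (u : ℂ) • K) β t = exp (t • ((-(β : ℂ)) • H₀ + u • (-(β : ℂ)) • K)) := by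
  rw [expH_eq_exp_smul, smul_add, smul_comm (-(β : ℂ)) (u : ℂ) K, Complex.coe_smul]

theorem hasDerivAt_trace_mul_expH_add_smul (P H₀ K : Matrix n n ℂ) (β s : ℝ) :
    HasDerivAt (fun u : ℝ => (P * expH (H₀ + (u : ℂ) • K) β 1).trace)
      (-(β : ℂ) * ∫ τ in (0:ℝ)..1,
        (P * expH (H₀ + (s : ℂ) • K) β τ * K * expH (H₀ + (s : ℂ) • K) β (1 - τ)).trace) s := by
  have h := hasDerivAt_trace_mul_exp_add_smul P ((-(β : ℂ)) • H₀) ((-(β : ℂ)) • K) s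
  simp only [mul_smul_comm, smul_mul_assoc, trace_smul, smul_eq_mul, integral_const_mul] at h
  simpa only [expH_add_smul_eq_exp, one_smul] using h

theorem hasDerivAt_trace_mul_gibbs_add_smul (A H₀ K : Matrix n n ℂ) (β s : ℝ)
    (hZ : partZ (H₀ + (s : ℂ) • K) β ≠ 0) :
    HasDerivAt (fun u : ℝ => (A * gibbs (H₀ + (u : ℂ) • K) β).trace)
      (-(β : ℂ) * ∫ τ in (0:ℝ)..1, gibbsCov (H₀ + (s : ℂ) • K) β τ K A) s := by
  have hN := hasDerivAt_trace_mul_expH_add_smul A H₀ K β s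
  have hZ' := hasDerivAt_trace_mul_expH_add_smul 1 H₀ K β s
  simp only [one_mul, trace_expH_mul_mul_expH, integral_const, sub_zero, one_smul] at hZ'
  simp only [trace_mul_gibbs]
  refine (hN.div hZ' hZ).congr_deriv ?_
  simp only [integral_gibbsCov, trace_gibbs_mul, mul_assoc, trace_mul_comm A]
  simp only [partZ] at hZ ⊢
  field_simp
  ring

theorem continuous_gibbsCov_add_smul (H₀ K X Y : Matrix n n ℂ) (β : ℝ)
    (hZ : ∀ s : ℝ, partZ (H₀ + (s : ℂ) • K) β ≠ 0) :
    Continuous fun p : ℝ × ℝ => gibbsCov (H₀ + (p.1 : ℂ) • K) β p.2 X Y := by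
  simp only [gibbsCov, trace_gibbs_mul, partZ, expH_add_smul_eq_exp] at hZ ⊢
  fun_prop (disch := exact fun p => hZ p.1)

end Matrix

/-- Perturbation formula: with `H(s) = H₀ + s (H − H₀)` and Gibbs states `g_s(β)`,
`Tr(A g₀(β)) − Tr(A g₁(β)) = β ∫₀¹∫₀¹ cov_{g_s(β)}^τ(H − H₀, A) ds dτ`. -/
theorem stmt9 (H₀ H : Matrix n n ℂ) (hH₀ : H₀.IsHermitian) (hH : H.IsHermitian)
    (β : ℝ) (A : Matrix n n ℂ) :
    (A * gibbs H₀ β).trace - (A * gibbs H β).trace =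
      (β : ℂ) * ∫ τ in (0:ℝ)..1, ∫ s in (0:ℝ)..1,
        gibbsCov (H₀ + (s : ℂ) • (H - H₀)) β τ (H - H₀) A := by
  rcases isEmpty_or_nonempty n with hn | hn
  · simp [gibbsCov, partZ, gibbs, Matrix.trace, Finset.univ_eq_empty]
  have hZ : ∀ s : ℝ, partZ (H₀ + (s : ℂ) • (H - H₀)) β ≠ 0 := fun s =>
    partZ_ne_zero (hH₀.add ((hH.sub hH₀).smul (by simp [IsSelfAdjoint]))) β
  have hcov := continuous_gibbsCov_add_smul H₀ (H - H₀) (H - H₀) A β hZ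
  have hFTC := integral_eq_sub_of_hasDerivAt
    (fun s _ => hasDerivAt_trace_mul_gibbs_add_smul A H₀ (H - H₀) β s (hZ s))
    ((continuous_const.mul
      (continuous_parametric_intervalIntegral_of_continuous' hcov 0 1)).intervalIntegrable 0 1)
  simp only [Complex.ofReal_zero, Complex.ofReal_one, zero_smul, add_zero, one_smul,
    add_sub_cancel, integral_const_mul] at hFTC
  rw [← intervalIntegral_swap_of_continuous
    (F := fun s τ => gibbsCov (H₀ + (s : ℂ) • (H - H₀)) β τ (H - H₀) A) hcov]
  linear_combination hFTC
end

section
/- Let Â be an operator on ℋ^{⊗4} satisfying Â = −S^{1,2} Â S^{1,2} and Â S^{3,4} = S^{3,4} Â, and let T be an operator satisfying T = S^{1,2} S^{3,4} T S^{3,4} S^{1,2}. Then Tr(S^{1,3} S^{2,4} Â T) = 0, where S^{i,j} denotes the operator swapping the i-th and j-th tensor factors of ℋ^{⊗4}. -/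
open Matrix

/-- The swap `S^{1,2}` of the first two tensor factors of `ℋ⊗ℋ⊗ℋ⊗ℋ`
(indices grouped as `(n × n) × (n × n)`). -/
def S12 (n : Type*) [DecidableEq n] : Matrix ((n × n) × (n × n)) ((n × n) × (n × n)) ℂ :=
  fun p q => if p.1.1 = q.1.2 ∧ p.1.2 = q.1.1 ∧ p.2.1 = q.2.1 ∧ p.2.2 = q.2.2 then 1 else 0

/-- The swap `S^{3,4}` of the last two tensor factors. -/
def S34 (n : Type*) [DecidableEq n] : Matrix ((n × n) × (n × n)) ((n × n) × (n × n)) ℂ :=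
  fun p q => if p.1.1 = q.1.1 ∧ p.1.2 = q.1.2 ∧ p.2.1 = q.2.2 ∧ p.2.2 = q.2.1 then 1 else 0

/-- The swap `S^{1,3}` of the first and third tensor factors. -/
def S13 (n : Type*) [DecidableEq n] : Matrix ((n × n) × (n × n)) ((n × n) × (n × n)) ℂ :=
  fun p q => if p.1.1 = q.2.1 ∧ p.1.2 = q.1.2 ∧ p.2.1 = q.1.1 ∧ p.2.2 = q.2.2 then 1 else 0

/-- The swap `S^{2,4}` of the second and fourth tensor factors. -/
def S24 (n : Type*) [DecidableEq n] : Matrix ((n × n) × (n × n)) ((n × n) × (n × n)) ℂ :=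
  fun p q => if p.1.1 = q.1.1 ∧ p.1.2 = q.2.2 ∧ p.2.1 = q.2.1 ∧ p.2.2 = q.1.2 then 1 else 0

section auxPerm
variable {α : Type*} [Fintype α] [DecidableEq α]

/-- The matrix of a permutation `σ`. -/
def permMat (σ : α → α) : Matrix α α ℂ := fun p q => if σ p = q then 1 else 0

lemma permMat_mul (σ : α → α) (M : Matrix α α ℂ) (p q : α) :
    (permMat σ * M) p q = M (σ p) q := by
  simp [permMat, Matrix.mul_apply]

end auxPerm

section auxSwaps
variable {n : Type*} [Fintype n] [DecidableEq n]

def σ12 : (n × n) × (n × n) → (n × n) × (n × n) := fun p => ((p.1.2, p.1.1), p.2)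
def σ34 : (n × n) × (n × n) → (n × n) × (n × n) := fun p => (p.1, (p.2.2, p.2.1))
def σ13 : (n × n) × (n × n) → (n × n) × (n × n) := fun p => ((p.2.1, p.1.2), (p.1.1, p.2.2))
def σ24 : (n × n) × (n × n) → (n × n) × (n × n) := fun p => ((p.1.1, p.2.2), (p.2.1, p.1.2))

set_option linter.unusedSectionVars false

lemma S12_eq : S12 n = permMat σ12 := by
  ext p q
  simp only [S12, permMat, σ12, Prod.ext_iff]
  split_ifs <;> first | rfl | tauto
lemma S34_eq : S34 n = permMat σ34 := by
  ext p q
  simp only [S34, permMat, σ34, Prod.ext_iff]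
  split_ifs <;> first | rfl | tauto
lemma S13_eq : S13 n = permMat σ13 := by
  ext p q
  simp only [S13, permMat, σ13, Prod.ext_iff]
  split_ifs <;> first | rfl | tauto
lemma S24_eq : S24 n = permMat σ24 := by
  ext p q
  simp only [S24, permMat, σ24, Prod.ext_iff]
  split_ifs <;> first | rfl | tauto

lemma h12sq : S12 n * S12 n = 1 := by
  ext p q
  rw [S12_eq, permMat_mul]
  simp [permMat, σ12, Matrix.one_apply, Prod.ext_iff, eq_comm]

lemma hconj : S34 n * (S12 n * (S13 n * (S24 n * (S12 n * S34 n)))) = S13 n * S24 n := by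
  ext p q
  rw [S34_eq, S12_eq, S13_eq, S24_eq]
  simp only [permMat_mul]
  rfl

end auxSwaps

/-- If `Â = −S^{1,2} Â S^{1,2}`, `Â S^{3,4} = S^{3,4} Â`, and
`T = S^{1,2} S^{3,4} T S^{3,4} S^{1,2}`, then `Tr(S^{1,3} S^{2,4} Â T) = 0`. -/
theorem stmt17 {n : Type*} [Fintype n] [DecidableEq n]
    (Ahat T : Matrix ((n × n) × (n × n)) ((n × n) × (n × n)) ℂ)
    (hA1 : Ahat = -(S12 n * Ahat * S12 n))
    (hA2 : Ahat * S34 n = S34 n * Ahat)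
    (hT : T = S12 n * S34 n * T * S34 n * S12 n) :
    (S13 n * S24 n * Ahat * T).trace = 0 := by
  have key : (S13 n * S24 n * Ahat * T).trace = -(S13 n * S24 n * Ahat * T).trace := by
    conv_lhs => rw [hA1, hT]
    have e1 : S13 n * S24 n * -(S12 n * Ahat * S12 n) *
        (S12 n * S34 n * T * S34 n * S12 n)
        = -(S13 n * S24 n * S12 n * (Ahat * S34 n) * (T * (S34 n * S12 n))) := by
      simp only [Matrix.mul_neg, Matrix.neg_mul, neg_inj]
      rw [show S13 n * S24 n * (S12 n * Ahat * S12 n) * (S12 n * S34 n * T * S34 n * S12 n)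
          = S13 n * S24 n * S12 n * Ahat * ((S12 n * S12 n) * S34 n) * (T * (S34 n * S12 n)) by
        noncomm_ring, h12sq]
      noncomm_ring
    rw [e1, hA2, Matrix.trace_neg, neg_inj]
    rw [show S13 n * S24 n * S12 n * (S34 n * Ahat) * (T * (S34 n * S12 n))
        = (S13 n * S24 n * S12 n * S34 n) * (Ahat * T * (S34 n * S12 n)) by noncomm_ring]
    rw [Matrix.trace_mul_comm]
    rw [show Ahat * T * (S34 n * S12 n) * (S13 n * S24 n * S12 n * S34 n)
        = Ahat * (T * (S34 n * (S12 n * (S13 n * (S24 n * (S12 n * S34 n)))))) by noncomm_ring,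
      hconj]
    rw [show Ahat * (T * (S13 n * S24 n)) = Ahat * T * (S13 n * S24 n) by noncomm_ring,
      Matrix.trace_mul_comm, ← Matrix.mul_assoc]
  have h2 : (2:ℂ) * (S13 n * S24 n * Ahat * T).trace = 0 := by linear_combination key
  have := mul_eq_zero.mp h2
  simpa using this
end
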